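/- arXiv:0902.3140 — 2 statements merged into one kernel-verified Lean document; each statement's English description precedes it below -/
import Mathlib

section
/- Let f be meromorphic on ℂ, let A ⊂ ℂ with Orb(A) bounded, let ε > 0 be such that B(Orb(A), 2ε) contains no poles of f, and let K > 1 bound |f'| from above on B(Orb(A), ε) (Euclidean metric). For x ∈ ℂ, let n(x) be the least integer n ≥ 1 such that dist(f^n(x), Orb(A)) > ε (assuming it exists). Then ε < K^{n(x)} · dist(f(x), Orb(A)); consequently there exist constants c₁, c₂ > 0, independent of x, with n(x) > −c₁ log dist(f(x), A) − c₂. -/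
open Metric MeasureTheory Filter Set Function Topology ENNReal NNReal

noncomputable section
attribute [local instance] Classical.propDecidable

/-- An abstract model of the Riemann sphere `Ĉ`: a compact metric space carrying the
spherical (chordal) metric, an open embedding `ι` of `ℂ` whose complement is the single
point `infty`, and the inversion `z ↦ 1/z` as a global homeomorphism. -/
structure SphereModel (𝕊 : Type) [MetricSpace 𝕊] [CompactSpace 𝕊] where
  ι : ℂ → 𝕊
  infty : 𝕊
  continuous_ι : Continuous ι
  injective_ι : Function.Injective ι
  range_ι : Set.range ι = {infty}ᶜ
  isOpenMap_ι : IsOpenMap ι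
  sphereInv : 𝕊 → 𝕊
  continuous_sphereInv : Continuous sphereInv
  sphereInv_invol : ∀ x, sphereInv (sphereInv x) = x
  sphereInv_ι : ∀ z : ℂ, z ≠ 0 → sphereInv (ι z) = ι z⁻¹
  sphereInv_zero : sphereInv (ι 0) = infty
  sphereInv_infty : sphereInv infty = ι 0
  dist_ι : ∀ z w : ℂ,
    dist (ι z) (ι w) = 2 * dist z w / (Real.sqrt (1 + ‖z‖ ^ 2) * Real.sqrt (1 + ‖w‖ ^ 2))
  dist_infty : ∀ z : ℂ, dist (ι z) infty = 2 / Real.sqrt (1 + ‖z‖ ^ 2)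

namespace SphereModel

variable {𝕊 : Type} [MetricSpace 𝕊] [CompactSpace 𝕊]

/-- The partially defined inverse of `ι` (junk value at `infty`). -/
def toC (S : SphereModel 𝕊) : 𝕊 → ℂ := Function.invFun S.ι

/-- The standard chart of the sphere around a point: the identity chart away from
`infty` and the chart `z ↦ 1/z` at `infty`. -/
def chart (S : SphereModel 𝕊) (w : 𝕊) : 𝕊 → ℂ :=
  if w = S.infty then S.toC ∘ S.sphereInv else S.toC

/-- Local inverse of `chart`. -/
def chartInv (S : SphereModel 𝕊) (w : 𝕊) : ℂ → 𝕊 :=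
  if w = S.infty then S.sphereInv ∘ S.ι else S.ι

/-- `f : 𝕊 → 𝕊` is holomorphic at `x`, read through the standard charts. -/
def HolAt (S : SphereModel 𝕊) (f : 𝕊 → 𝕊) (x : 𝕊) : Prop :=
  ContinuousAt f x ∧ AnalyticAt ℂ (S.chart (f x) ∘ f ∘ S.chartInv x) (S.chart x x)

/-- `f` represents a meromorphic function `ℂ → Ĉ`: it is holomorphic (as a sphere-valued
map) at every point of `ℂ`.  (The value of `f` at `infty` is junk.) -/
def MeromorphicDyn (S : SphereModel 𝕊) (f : 𝕊 → 𝕊) : Prop :=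
  ∀ z : ℂ, S.HolAt f (S.ι z)

/-- `f` represents a transcendental meromorphic function: it is meromorphic on `ℂ` and
admits no holomorphic extension at `infty`. -/
def TranscendentalDyn (S : SphereModel 𝕊) (f : 𝕊 → 𝕊) : Prop :=
  S.MeromorphicDyn f ∧
    ¬ ∃ g : 𝕊 → 𝕊, (∀ z : ℂ, g (S.ι z) = f (S.ι z)) ∧ S.HolAt g S.infty

/-- `f` represents a rational map of degree at least `2`: holomorphic on the whole sphere,
non-constant and non-injective. -/
def RationalDegGe2 (S : SphereModel 𝕊) (f : 𝕊 → 𝕊) : Prop :=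
  (∀ x, S.HolAt f x) ∧ (∀ c, f ≠ fun _ => c) ∧ ¬ Function.Injective f

/-- `f` is a transcendental meromorphic function or a rational map of degree `≥ 2`. -/
def MeroOrRat (S : SphereModel 𝕊) (f : 𝕊 → 𝕊) : Prop :=
  S.TranscendentalDyn f ∨ S.RationalDegGe2 f

/-- The domain of holomorphy of `f` (`ℂ` for transcendental maps, `Ĉ` for rational ones). -/
def dom (S : SphereModel 𝕊) (f : 𝕊 → 𝕊) : Set 𝕊 := {x | S.HolAt f x}

/-- `f^[n] z` is defined (all earlier iterates lie in the domain of `f`). -/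
def DefinedUpTo (S : SphereModel 𝕊) (f : 𝕊 → 𝕊) (z : 𝕊) (n : ℕ) : Prop :=
  ∀ i < n, f^[i] z ∈ S.dom f

/-- The (partially defined) forward orbit of a point. -/
def orb (S : SphereModel 𝕊) (f : 𝕊 → 𝕊) (z : 𝕊) : Set 𝕊 :=
  {w | ∃ n, S.DefinedUpTo f z n ∧ f^[n] z = w}

/-- The forward orbit of a set. -/
def orbSet (S : SphereModel 𝕊) (f : 𝕊 → 𝕊) (A : Set 𝕊) : Set 𝕊 :=
  ⋃ z ∈ A, S.orb f z

/-- The Fatou set: points with a neighbourhood on which all iterates are defined and form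
a normal family (equivalently, on the compact sphere, an equicontinuous family). -/
def fatou (S : SphereModel 𝕊) (f : 𝕊 → 𝕊) : Set 𝕊 :=
  {x | ∃ U ∈ 𝓝 x, (∀ y ∈ U, ∀ n, S.DefinedUpTo f y n) ∧
      EquicontinuousOn (fun n : ℕ => f^[n]) U}

/-- The Julia set: the complement of the Fatou set. -/
def julia (S : SphereModel 𝕊) (f : 𝕊 → 𝕊) : Set 𝕊 := (S.fatou f)ᶜ

/-- Singular values: `v` is not singular iff it has an open neighbourhood `W` on which
all inverse branches of `f` are well-defined univalent maps. -/
def singularValues (S : SphereModel 𝕊) (f : 𝕊 → 𝕊) : Set 𝕊 :=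
  {v | ¬ ∃ W : Set 𝕊, IsOpen W ∧ v ∈ W ∧
      ∀ x ∈ S.dom f, f x ∈ W →
        ∃ g : 𝕊 → 𝕊, ContinuousOn g W ∧ Set.InjOn g W ∧ g (f x) = x ∧
          ∀ w ∈ W, g w ∈ S.dom f ∧ f (g w) = w}

/-- The post-singular set `P(f)`. -/
def postSingular (S : SphereModel 𝕊) (f : 𝕊 → 𝕊) : Set 𝕊 :=
  closure (S.orbSet f (S.singularValues f))

end SphereModel

/-- The ω-limit set of a point under iteration. -/
def omegaLimitSet {α : Type*} [TopologicalSpace α] (f : α → α) (z : α) : Set α :=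
  ⋂ n : ℕ, closure {w | ∃ k, n ≤ k ∧ f^[k] z = w}

/-- A nice set: an open set such that no boundary point ever enters the set. -/
def IsNice {α : Type*} [TopologicalSpace α] (f : α → α) (U : Set α) : Prop :=
  IsOpen U ∧ ∀ n : ℕ, 0 < n → f^[n] '' frontier U ∩ U = ∅

/-- The norm of the derivative of `f` at `x` with respect to the underlying metric,
defined as the limsup of difference quotients (possibly `∞`). -/
def ednorm {α : Type*} [MetricSpace α] (f : α → α) (x : α) : ℝ≥0∞ :=
  Filter.limsup (fun y => edist (f y) (f x) / edist y x) (𝓝[≠] x)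

/-- The norm of the derivative with respect to the Euclidean metric, read through `ι`
(`∞` at `infty` and at poles). -/
def ednormEuc {𝕊 : Type} [MetricSpace 𝕊] [CompactSpace 𝕊] (S : SphereModel 𝕊)
    (f : 𝕊 → 𝕊) (x : 𝕊) : ℝ≥0∞ :=
  if x = S.infty ∨ f x = S.infty then ⊤
  else ENNReal.ofReal ‖deriv (fun w => S.toC (f (S.ι w))) (S.toC x)‖

/-- The family `𝒱_n(U, z, R)` of pullbacks of `U` by `f^n` that extend univalently over
`B(z,R)`. -/
def pullbackFam {α : Type*} [MetricSpace α] (f : α → α) (U : Set α) (z : α) (R : ℝ)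
    (n : ℕ) : Set (Set α) :=
  {V | IsOpen V ∧ f^[n] '' V = U ∧
    ∃ V' : Set α, V ⊆ V' ∧ IsConnected V' ∧ Set.InjOn (f^[n]) V' ∧
      f^[n] '' V' = Metric.ball z R}

/-- A `(t,p)`-conformal measure for `f`, with respect to the derivative norm `nd`
(spherical or Euclidean): finite on compact sets disjoint from the post-singular set,
with Jacobian `exp p * nd ^ t` wherever the latter is finite (`0 ^ 0 = 1` by the
`ENNReal.rpow` convention), and `m {x} = 0`, `m {f x}` zero or finite whenever
`nd x ^ t = ∞`. -/
def IsConformalMeasure {𝕊 : Type} [MetricSpace 𝕊] [CompactSpace 𝕊] [MeasurableSpace 𝕊]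
    (S : SphereModel 𝕊) (f : 𝕊 → 𝕊) (t p : ℝ) (nd : 𝕊 → ℝ≥0∞) (m : Measure 𝕊) : Prop :=
  (∀ K : Set 𝕊, IsCompact K → Disjoint K (S.postSingular f) → m K < ⊤) ∧
  (∀ A : Set 𝕊, MeasurableSet A → A ⊆ S.dom f → Set.InjOn f A →
      (∀ x ∈ A, nd x ^ t ≠ ⊤) →
      m (f '' A) = ∫⁻ x in A, ENNReal.ofReal (Real.exp p) * nd x ^ t ∂m) ∧
  (∀ x, nd x ^ t = ⊤ → m {x} = 0 ∧ (m {f x} = 0 ∨ m {f x} < ⊤))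

/-- The set `E` of univalently inaccessible points. -/
def univInaccessible {𝕊 : Type} [MetricSpace 𝕊] [CompactSpace 𝕊] (S : SphereModel 𝕊)
    (f : 𝕊 → 𝕊) : Set 𝕊 :=
  {z | ∃ U : Set 𝕊, IsOpen U ∧ (U ∩ S.julia f).Nonempty ∧
    ¬ ∃ (y : 𝕊) (n k : ℕ), y ∈ U ∧ f^[n] z = f^[k] y ∧
      0 < ednorm (f^[n]) z * ednorm (f^[k]) y ∧
      ednorm (f^[n]) z * ednorm (f^[k]) y < ⊤}

/-- A holomorphic inverse branch of `f^{-n}` on `W`. -/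
def IsInvBranch {𝕊 : Type} [MetricSpace 𝕊] [CompactSpace 𝕊] (S : SphereModel 𝕊)
    (f : 𝕊 → 𝕊) (n : ℕ) (W : Set 𝕊) (g : 𝕊 → 𝕊) : Prop :=
  (∀ w ∈ W, S.HolAt g w) ∧ ∀ w ∈ W, f^[n] (g w) = w

/-- The multiplier of `f^[n]` at a point `z`, computed in the standard chart at `z`. -/
def SphereModel.multiplier {𝕊 : Type} [MetricSpace 𝕊] [CompactSpace 𝕊]
    (S : SphereModel 𝕊) (f : 𝕊 → 𝕊) (n : ℕ) (z : 𝕊) : ℂ :=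
  deriv (S.chart z ∘ f^[n] ∘ S.chartInv z) (S.chart z z)

/-- A parabolic periodic point: a periodic point whose cycle has multiplier a root of
unity. -/
def IsParabolicPeriodic {𝕊 : Type} [MetricSpace 𝕊] [CompactSpace 𝕊] (S : SphereModel 𝕊)
    (f : 𝕊 → 𝕊) (z : 𝕊) : Prop :=
  ∃ n : ℕ, 0 < n ∧ f^[n] z = z ∧ ∃ k : ℕ, 0 < k ∧ S.multiplier f n z ^ k = 1

/-- `x` returns to `U` under iteration of `f`. -/
def Returns {α : Type*} (f : α → α) (U : Set α) (x : α) : Prop :=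
  ∃ k, 1 ≤ k ∧ f^[k] x ∈ U

/-- The first return time to `U` (junk value `0` if the point never returns). -/
def returnTime {α : Type*} (f : α → α) (U : Set α) (x : α) : ℕ :=
  sInf {k | 1 ≤ k ∧ f^[k] x ∈ U}

/-- The first return map to `U` (the identity where undefined). -/
def firstReturn {α : Type*} (f : α → α) (U : Set α) (x : α) : α :=
  f^[returnTime f U x] x

/-- The domain of the first return map. -/
def returnDom {α : Type*} (f : α → α) (U : Set α) : Set α :=
  {x ∈ U | Returns f U x}

/-- `Λ_U = ⋂_{k ≥ 0} φ_U^{-k}(U)`: points all of whose iterates under the first return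
map are defined (and in `U`). -/
def LambdaSet {α : Type*} (f : α → α) (U : Set α) : Set α :=
  {x | ∀ k : ℕ, (firstReturn f U)^[k] x ∈ returnDom f U}

/-- `φ_U^{-k}(A)`, taking definedness of the first return map into account. -/
def phiPreimage {α : Type*} (f : α → α) (U : Set α) (k : ℕ) (A : Set α) : Set α :=
  {x | (∀ i < k, (firstReturn f U)^[i] x ∈ returnDom f U) ∧ (firstReturn f U)^[k] x ∈ A}

/-- Euclidean distance from a point of the sphere to a subset of `ℂ` (`∞` at `infty`). -/
def SphereModel.eDistToSet {𝕊 : Type} [MetricSpace 𝕊] [CompactSpace 𝕊]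
    (S : SphereModel 𝕊) (y : 𝕊) (B : Set ℂ) : ℝ≥0∞ :=
  if y = S.infty then ⊤ else ENNReal.ofReal (Metric.infDist (S.toC y) B)

/-- Euclidean distance `dist (f z, a)` (junk value `1` at poles, where the true distance
is infinite; note `log (1/1) = 0 = log⁺ (1/∞)`). -/
def SphereModel.fDist {𝕊 : Type} [MetricSpace 𝕊] [CompactSpace 𝕊] (S : SphereModel 𝕊)
    (f : 𝕊 → 𝕊) (a : ℂ) (z : ℂ) : ℝ :=
  if f (S.ι z) = S.infty then 1 else dist (S.toC (f (S.ι z))) a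

/-- Euclidean distance `dist (f z, A)` to a set (junk value `1` at poles). -/
def SphereModel.fDistSet {𝕊 : Type} [MetricSpace 𝕊] [CompactSpace 𝕊] (S : SphereModel 𝕊)
    (f : 𝕊 → 𝕊) (A : Set ℂ) (z : ℂ) : ℝ :=
  if f (S.ι z) = S.infty then 1 else Metric.infDist (S.toC (f (S.ι z))) A

/-- A subset of the sphere which is a bounded subset of `ℂ`. -/
def SphereModel.BoundedInC {𝕊 : Type} [MetricSpace 𝕊] [CompactSpace 𝕊]
    (S : SphereModel 𝕊) (U : Set 𝕊) : Prop :=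
  ∃ B : Set ℂ, Bornology.IsBounded B ∧ U = S.ι '' B

end

/-- The set of times `n ≥ 1` at which the orbit of `x` is defined and is farther than
`ε` (in the Euclidean metric) from the set `OA ⊆ ℂ`. -/
def escapeSet {𝕊 : Type} [MetricSpace 𝕊] [CompactSpace 𝕊] (S : SphereModel 𝕊)
    (f : 𝕊 → 𝕊) (OA : Set ℂ) (ε : ℝ) (x : ℂ) : Set ℕ :=
  {n | 1 ≤ n ∧ S.DefinedUpTo f (S.ι x) n ∧
    ENNReal.ofReal ε < S.eDistToSet (f^[n] (S.ι x)) OA}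

/-- `n(x)`: the least `n ≥ 1` with `dist (f^n x, Orb A) > ε`. -/
noncomputable def escapeTime {𝕊 : Type} [MetricSpace 𝕊] [CompactSpace 𝕊] (S : SphereModel 𝕊)
    (f : 𝕊 → 𝕊) (OA : Set ℂ) (ε : ℝ) (x : ℂ) : ℕ :=
  sInf (escapeSet S f OA ε x)

/-!
Read `f` in the affine chart as `g`. If `dist (z, Orb A) ≤ ε` and `a ∈ Orb A` is close to `z`,
then `g a ∈ Orb A` and the mean value inequality on the ball `B(a, ε)`, where `|g'| ≤ K`, give
`dist (g z, Orb A) ≤ |g z - g a| ≤ K |z - a|`; the case `dist (z, Orb A) = ε` follows by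
continuity, since no pole lies within `2ε`. So the distance to `Orb A` grows at most by the
factor `K` per step until the escape time `n`, where it first exceeds `ε`: this gives
`ε < K^(n-1) dist (f x, Orb A)`, and taking logarithms gives the lower bound on `n`.
-/

theorem Metric.mem_cthickening_iff_infDist_le {X : Type*} [PseudoMetricSpace X] {s : Set X}
    {x : X} {δ : ℝ} (hs : s.Nonempty) (hδ : 0 ≤ δ) :
    x ∈ cthickening δ s ↔ infDist x s ≤ δ := by
  rw [mem_cthickening_iff, infDist, ENNReal.le_ofReal_iff_toReal_le (infEDist_ne_top hs) hδ]

section MeanValue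

variable {𝕜 F : Type*} [RCLike 𝕜] [NormedAddCommGroup F] [NormedSpace 𝕜 F]
  {g : 𝕜 → F} {s : Set 𝕜} {t : Set F} {ε K : ℝ}

theorem infDist_image_le_mul_dist_of_mem_ball (hgst : MapsTo g s t)
    (hdiff : ∀ z ∈ thickening ε s, DifferentiableAt 𝕜 g z)
    (hderiv : ∀ z ∈ thickening ε s, ‖deriv g z‖ ≤ K) {a z : 𝕜} (ha : a ∈ s)
    (hz : z ∈ ball a ε) : infDist (g z) t ≤ K * dist z a := by
  have hball : ball a ε ⊆ thickening ε s := ball_subset_thickening ha ε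
  calc infDist (g z) t ≤ dist (g z) (g a) := infDist_le_dist_of_mem (hgst ha)
    _ ≤ K * dist z a := by
      simpa only [dist_eq_norm] using (convex_ball a ε).norm_image_sub_le_of_norm_deriv_le
        (fun w hw => hdiff w (hball hw)) (fun w hw => hderiv w (hball hw))
        (mem_ball_self (pos_of_mem_ball hz)) hz

theorem infDist_image_le_mul_infDist (hs : s.Nonempty) (hε : 0 < ε) (hgst : MapsTo g s t)
    (hdiff : ∀ z ∈ cthickening ε s, DifferentiableAt 𝕜 g z)
    (hderiv : ∀ z ∈ thickening ε s, ‖deriv g z‖ ≤ K) {z : 𝕜} (hz : z ∈ cthickening ε s) :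
    infDist (g z) t ≤ K * infDist z s := by
  have hdiff' : ∀ w ∈ thickening ε s, DifferentiableAt 𝕜 g w :=
    fun w hw => hdiff w (thickening_subset_cthickening ε s hw)
  have hK : 0 ≤ K := by
    obtain ⟨a, ha⟩ := hs
    exact (norm_nonneg _).trans (hderiv a (self_subset_thickening hε s ha))
  have hopen : ∀ w ∈ thickening ε s, infDist (g w) t ≤ K * infDist w s := by
    intro w hw
    have hwε : infDist w s < ε := (mem_thickening_iff_infDist_lt hs).1 hw
    refine ge_of_tendsto (((continuous_const_mul K).tendsto _).mono_left nhdsWithin_le_nhds)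
      (eventually_of_mem (Ioo_mem_nhdsGT hwε) fun r hr => ?_)
    obtain ⟨a, ha, hwa⟩ := (infDist_lt_iff hs).1 hr.1
    calc infDist (g w) t ≤ K * dist w a :=
          infDist_image_le_mul_dist_of_mem_ball hgst hdiff' hderiv ha
            (mem_ball.2 (hwa.trans hr.2))
      _ ≤ K * r := mul_le_mul_of_nonneg_left hwa.le hK
  have hz' : z ∈ closure (thickening ε s) := by rwa [closure_thickening hε]
  exact ContinuousWithinAt.closure_le hz'
    ((continuous_infDist_pt t).continuousAt.comp (hdiff z hz).continuousAt).continuousWithinAt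
    ((continuous_infDist_pt s).const_mul K).continuousWithinAt hopen

end MeanValue

theorem apply_iterate_le_pow_mul {α M : Type*} [CommMonoid M] [Preorder M] [MulLeftMono M]
    {f : α → α} {φ : α → M} {r c : M} (hf : ∀ q, φ q ≤ r → φ (f q) ≤ c * φ q) {p : α} {j : ℕ}
    (hj : ∀ i < j, φ (f^[i] p) ≤ r) : φ (f^[j] p) ≤ c ^ j * φ p := by
  induction j with
  | zero => simp
  | succ j ih =>
    calc φ (f^[j + 1] p) = φ (f (f^[j] p)) := by rw [Function.iterate_succ_apply']
      _ ≤ c * φ (f^[j] p) := hf _ (hj j j.lt_succ_self)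
      _ ≤ c * (c ^ j * φ p) := mul_le_mul_right (ih fun i hi => hj i (hi.trans j.lt_succ_self)) c
      _ = c ^ (j + 1) * φ p := by rw [pow_succ', mul_assoc]

theorem neg_mul_log_sub_lt_of_lt_pow_mul {K ε d : ℝ} {n : ℕ} (hK : 1 < K) (hε : 0 < ε)
    (h : ε < K ^ n * d) :
    -((Real.log K)⁻¹ * Real.log d) - ((Real.log K)⁻¹ * |Real.log ε| + 1) < n := by
  have hKn : 0 < K ^ n := pow_pos (zero_lt_one.trans hK) n
  have hd : 0 < d := pos_of_mul_pos_right (hε.trans h) hKn.le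
  have hlogK : 0 < Real.log K := Real.log_pos hK
  have hlog : Real.log ε < n * Real.log K + Real.log d := by
    simpa only [Real.log_mul hKn.ne' hd.ne', Real.log_pow] using Real.log_lt_log hε h
  have hdiv : (Real.log K)⁻¹ * Real.log ε < n + (Real.log K)⁻¹ * Real.log d := by
    calc (Real.log K)⁻¹ * Real.log ε < (Real.log K)⁻¹ * (n * Real.log K + Real.log d) :=
          mul_lt_mul_of_pos_left hlog (inv_pos.2 hlogK)
      _ = n + (Real.log K)⁻¹ * Real.log d := by
          rw [mul_add, mul_comm (n : ℝ), inv_mul_cancel_left₀ hlogK.ne']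
  have habs : -((Real.log K)⁻¹ * |Real.log ε|) ≤ (Real.log K)⁻¹ * Real.log ε := by
    rw [← mul_neg]; exact mul_le_mul_of_nonneg_left (neg_abs_le _) (inv_nonneg.2 hlogK.le)
  linarith

namespace SphereModel

variable {𝕊 : Type} [MetricSpace 𝕊] [CompactSpace 𝕊] (S : SphereModel 𝕊) {f : 𝕊 → 𝕊}

@[simp]
theorem toC_ι (z : ℂ) : S.toC (S.ι z) = z :=
  leftInverse_invFun S.injective_ι z

theorem ι_ne_infty (z : ℂ) : S.ι z ≠ S.infty := by
  have hz : S.ι z ∈ range S.ι := mem_range_self z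
  rwa [S.range_ι] at hz

theorem exists_eq_ι {p : 𝕊} (hp : p ≠ S.infty) : ∃ z, S.ι z = p := by
  rw [← mem_range, S.range_ι]
  exact hp

theorem ι_toC {p : 𝕊} (hp : p ≠ S.infty) : S.ι (S.toC p) = p := by
  obtain ⟨z, rfl⟩ := S.exists_eq_ι hp
  rw [toC_ι]

@[simp]
theorem eDistToSet_ι (z : ℂ) (B : Set ℂ) :
    S.eDistToSet (S.ι z) B = ENNReal.ofReal (infDist z B) := by
  rw [eDistToSet, if_neg (S.ι_ne_infty z), toC_ι]

@[simp]
theorem eDistToSet_infty (B : Set ℂ) : S.eDistToSet S.infty B = ⊤ :=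
  if_pos rfl

theorem eDistToSet_le_of_subset (p : 𝕊) {B C : Set ℂ} (hB : B.Nonempty) (hBC : B ⊆ C) :
    S.eDistToSet p C ≤ S.eDistToSet p B := by
  unfold eDistToSet
  split_ifs
  · exact le_rfl
  · exact ENNReal.ofReal_le_ofReal (infDist_le_infDist_of_subset hBC hB)

theorem MeromorphicDyn.analyticAt {S : SphereModel 𝕊} (hf : S.MeromorphicDyn f) {z : ℂ}
    (hz : f (S.ι z) ≠ S.infty) : AnalyticAt ℂ (fun w => S.toC (f (S.ι w))) z := by
  have h := (hf z).2
  simp only [chart, chartInv, hz, S.ι_ne_infty, if_false, toC_ι] at h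
  exact h

theorem subset_orbSet (B : Set 𝕊) : B ⊆ S.orbSet f B :=
  fun _ hp => mem_biUnion hp ⟨0, fun _ hi => absurd hi (Nat.not_lt_zero _), rfl⟩

theorem apply_mem_orbSet {B : Set 𝕊} {p : 𝕊} (hp : p ∈ S.orbSet f B) (hpf : p ∈ S.dom f) :
    f p ∈ S.orbSet f B := by
  obtain ⟨z, hz, n, hdef, rfl⟩ := mem_iUnion₂.1 hp
  refine mem_biUnion hz ⟨n + 1, fun i hi => ?_, iterate_succ_apply' f n z⟩
  rcases Nat.lt_succ_iff_lt_or_eq.1 hi with hi | rfl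
  exacts [hdef i hi, hpf]

variable {S}

theorem MeromorphicDyn.mapsTo_of_image_eq_orbSet (hf : S.MeromorphicDyn f) {A OA : Set ℂ}
    (hOA : S.ι '' OA = S.orbSet f (S.ι '' A)) :
    MapsTo (fun w => S.toC (f (S.ι w))) OA OA := by
  intro a ha
  obtain ⟨b, hb, hba⟩ : f (S.ι a) ∈ S.ι '' OA :=
    hOA ▸ S.apply_mem_orbSet (hOA ▸ mem_image_of_mem S.ι ha) (hf a)
  simpa [← hba] using hb

theorem subset_of_image_eq_orbSet {A OA : Set ℂ} (hOA : S.ι '' OA = S.orbSet f (S.ι '' A)) :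
    A ⊆ OA :=
  (image_subset_image_iff S.injective_ι).1 (hOA ▸ S.subset_orbSet _)

theorem eDistToSet_apply_le_mul (hf : S.MeromorphicDyn f) {OA : Set ℂ}
    (hinv : MapsTo (fun w => S.toC (f (S.ι w))) OA OA) {ε K : ℝ} (hε : 0 < ε)
    (hpoles : ∀ z : ℂ, infDist z OA < 2 * ε → f (S.ι z) ≠ S.infty)
    (hderiv : ∀ z : ℂ, infDist z OA < ε → ‖deriv (fun w => S.toC (f (S.ι w))) z‖ ≤ K)
    {q : 𝕊} (hq : S.eDistToSet q OA ≤ ENNReal.ofReal ε) :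
    S.eDistToSet (f q) OA ≤ ENNReal.ofReal K * S.eDistToSet q OA := by
  obtain ⟨z, rfl⟩ := S.exists_eq_ι (p := q) (by rintro rfl; simp at hq)
  rw [eDistToSet_ι, ENNReal.ofReal_le_ofReal_iff hε.le] at hq
  rw [← S.ι_toC (hpoles z (by linarith)), eDistToSet_ι, eDistToSet_ι,
    ← ENNReal.ofReal_mul' infDist_nonneg]
  refine ENNReal.ofReal_le_ofReal ?_
  rcases OA.eq_empty_or_nonempty with rfl | hOA
  · simp
  have hcth : ∀ w, w ∈ cthickening ε OA ↔ infDist w OA ≤ ε :=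
    fun w => mem_cthickening_iff_infDist_le hOA hε.le
  refine infDist_image_le_mul_infDist hOA hε hinv (fun w hw => ?_)
    (fun w hw => hderiv w ((mem_thickening_iff_infDist_lt hOA).1 hw)) ((hcth z).2 hq)
  exact (hf.analyticAt (hpoles w (by linarith [(hcth w).1 hw]))).differentiableAt

end SphereModel

section EscapeTime

variable {𝕊 : Type} [MetricSpace 𝕊] [CompactSpace 𝕊] {S : SphereModel 𝕊} {f : 𝕊 → 𝕊}
  {OA : Set ℂ} {ε : ℝ} {x : ℂ}

theorem escapeTime_mem (hne : (escapeSet S f OA ε x).Nonempty) :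
    escapeTime S f OA ε x ∈ escapeSet S f OA ε x :=
  Nat.sInf_mem hne

theorem eDistToSet_iterate_le_of_lt_escapeTime (hne : (escapeSet S f OA ε x).Nonempty) {i : ℕ}
    (hi : 1 ≤ i) (hin : i < escapeTime S f OA ε x) :
    S.eDistToSet (f^[i] (S.ι x)) OA ≤ ENNReal.ofReal ε :=
  not_lt.1 fun h => Nat.notMem_of_lt_sInf hin
    ⟨hi, fun k hk => (escapeTime_mem hne).2.1 k (hk.trans hin), h⟩

theorem ofReal_lt_pow_escapeTime_mul_eDistToSet (hf : S.MeromorphicDyn f) {A : Set ℂ}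
    (hOA : S.ι '' OA = S.orbSet f (S.ι '' A)) (hε : 0 < ε)
    (hpoles : ∀ z : ℂ, infDist z OA < 2 * ε → f (S.ι z) ≠ S.infty) {K : ℝ} (hK : 1 ≤ K)
    (hderiv : ∀ z : ℂ, infDist z OA < ε → ‖deriv (fun w => S.toC (f (S.ι w))) z‖ ≤ K)
    (hne : (escapeSet S f OA ε x).Nonempty) :
    ENNReal.ofReal ε <
      ENNReal.ofReal K ^ escapeTime S f OA ε x * S.eDistToSet (f (S.ι x)) OA := by
  obtain ⟨hn1, -, hesc⟩ := escapeTime_mem hne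
  obtain ⟨m, hm⟩ := Nat.exists_eq_add_of_le' hn1
  have hstep : ∀ q, S.eDistToSet q OA ≤ ENNReal.ofReal ε →
      S.eDistToSet (f q) OA ≤ ENNReal.ofReal K * S.eDistToSet q OA :=
    fun _ => S.eDistToSet_apply_le_mul hf (hf.mapsTo_of_image_eq_orbSet hOA) hε hpoles hderiv
  calc ENNReal.ofReal ε < S.eDistToSet (f^[m] (f (S.ι x))) OA := by
        rwa [hm, iterate_succ_apply] at hesc
    _ ≤ ENNReal.ofReal K ^ m * S.eDistToSet (f (S.ι x)) OA :=
        apply_iterate_le_pow_mul hstep fun i hi => by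
          rw [← iterate_succ_apply]
          exact eDistToSet_iterate_le_of_lt_escapeTime hne (by omega) (by omega)
    _ ≤ ENNReal.ofReal K ^ escapeTime S f OA ε x * S.eDistToSet (f (S.ι x)) OA := by
        rw [hm]
        gcongr
        exacts [ENNReal.one_le_ofReal.2 hK, m.le_succ]

end EscapeTime

theorem escape_time_lower_bound_general {𝕊 : Type} [MetricSpace 𝕊] [CompactSpace 𝕊]
    (S : SphereModel 𝕊) (f : 𝕊 → 𝕊) (hf : S.MeromorphicDyn f)
    (A OA : Set ℂ) (hOA : S.ι '' OA = S.orbSet f (S.ι '' A))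
    (ε : ℝ) (hε : 0 < ε)
    (hpoles : ∀ z : ℂ, Metric.infDist z OA < 2 * ε → f (S.ι z) ≠ S.infty)
    (K : ℝ) (hK : 1 < K)
    (hderiv : ∀ z : ℂ, Metric.infDist z OA < ε →
      ‖deriv (fun w => S.toC (f (S.ι w))) z‖ ≤ K) :
    (∀ x : ℂ, (escapeSet S f OA ε x).Nonempty →
      ENNReal.ofReal ε <
        ENNReal.ofReal K ^ escapeTime S f OA ε x * S.eDistToSet (f (S.ι x)) OA) ∧
    ∃ c₁ > (0:ℝ), ∃ c₂ > (0:ℝ), ∀ x : ℂ, (escapeSet S f OA ε x).Nonempty →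
      -(c₁ * Real.log ((S.eDistToSet (f (S.ι x)) A).toReal)) - c₂ <
        (escapeTime S f OA ε x : ℝ) := by
  have hescape := fun (x : ℂ) hne =>
    ofReal_lt_pow_escapeTime_mul_eDistToSet (x := x) hf hOA hε hpoles hK.le hderiv hne
  have hc₁ : 0 < (Real.log K)⁻¹ := inv_pos.2 (Real.log_pos hK)
  refine ⟨hescape, _, hc₁, (Real.log K)⁻¹ * |Real.log ε| + 1, by positivity, fun x hne => ?_⟩
  set D := S.eDistToSet (f (S.ι x)) A
  rcases eq_or_ne D.toReal 0 with h0 | h0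
  · rw [h0, Real.log_zero, mul_zero, neg_zero, zero_sub]
    exact (neg_neg_of_pos (by positivity)).trans_le (Nat.cast_nonneg _)
  have hA : A.Nonempty := nonempty_iff_ne_empty.2 fun hA => h0 <| by
    simp [D, SphereModel.eDistToSet, hA, apply_ite ENNReal.toReal]
  have hD : D ≠ ⊤ := fun h => h0 (by rw [h, ENNReal.toReal_top])
  refine neg_mul_log_sub_lt_of_lt_pow_mul hK hε (ENNReal.ofReal_lt_ofReal_iff'.1 ?_).1
  rw [ENNReal.ofReal_mul (by positivity), ENNReal.ofReal_pow (by positivity),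
    ENNReal.ofReal_toReal hD]
  have hAOA : A ⊆ OA := SphereModel.subset_of_image_eq_orbSet hOA
  exact (hescape x hne).trans_le (mul_le_mul_right (S.eDistToSet_le_of_subset _ hA hAOA) _)

/-- **Escape time estimate** (proof of Theorem 1.3).  If `Orb A` is bounded, the
`2ε`-neighbourhood of `Orb A` contains no poles, and `|f'| ≤ K` on its
`ε`-neighbourhood, then `ε < K^{n(x)} dist (f x, Orb A)`, and consequently
`n(x) > -c₁ log dist (f x, A) - c₂` for constants `c₁, c₂ > 0` independent of `x`. -/
theorem escape_time_lower_bound {𝕊 : Type} [MetricSpace 𝕊] [CompactSpace 𝕊]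
    (S : SphereModel 𝕊) (f : 𝕊 → 𝕊) (hf : S.MeromorphicDyn f)
    (A OA : Set ℂ) (hOA : S.ι '' OA = S.orbSet f (S.ι '' A))
    (hbdd : Bornology.IsBounded OA)
    (ε : ℝ) (hε : 0 < ε)
    (hpoles : ∀ z : ℂ, Metric.infDist z OA < 2 * ε → f (S.ι z) ≠ S.infty)
    (K : ℝ) (hK : 1 < K)
    (hderiv : ∀ z : ℂ, Metric.infDist z OA < ε →
      ‖deriv (fun w => S.toC (f (S.ι w))) z‖ ≤ K) :
    (∀ x : ℂ, (escapeSet S f OA ε x).Nonempty →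
      ENNReal.ofReal ε <
        ENNReal.ofReal K ^ escapeTime S f OA ε x * S.eDistToSet (f (S.ι x)) OA) ∧
    ∃ c₁ > (0:ℝ), ∃ c₂ > (0:ℝ), ∀ x : ℂ, (escapeSet S f OA ε x).Nonempty →
      -(c₁ * Real.log ((S.eDistToSet (f (S.ι x)) A).toReal)) - c₂ <
        (escapeTime S f OA ε x : ℝ) :=
  escape_time_lower_bound_general S f hf A OA hOA ε hε hpoles K hK hderiv
end

section
/- Let f : ℂ → Ĉ be meromorphic with a pole p of order M ≥ 1, and let μ = ρ·m be an f-invariant measure absolutely continuous with respect to Euclidean Lebesgue measure m, whose density ρ is bounded away from zero on a neighbourhood of p. Then there exist c > 0 and r₀ > 0 such that ρ(z) > c / |z|^{2 + 2/M} for (m-almost) all z with |z| ≥ r₀. -/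
open Metric MeasureTheory Filter Set Function Topology ENNReal NNReal

noncomputable section
attribute [local instance] Classical.propDecidable

end

/-! Near the pole `f = 1 / η ^ M` for a local coordinate `η` at `q` (`η q = 0`, `η' q ≠ 0`), so
`h z = η⁻¹ (z ^ (-1/M))` is an inverse branch of `f`, defined for large `z` off the negative real
axis (a null set), with values near `q` and `|h' z|² ≥ C |z|^(-2-2/M)`. For a measurable set `E`
far out, invariance and the change of variables formula give
`μ E = μ (f⁻¹ E) ≥ μ (h E) ≥ b vol (h E) = b ∫_E |h'|² ≥ b C ∫_E |z|^(-2-2/M)`,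
hence `ρ ≥ b C |z|^(-2-2/M)` almost everywhere far out. -/

namespace Complex

theorem ae_mem_slitPlane : ∀ᵐ z : ℂ, z ∈ slitPlane :=
  ae_iff.mpr <| ae_eq_univ.mp <|
    volume_preserving_equiv_real_prod.quasiMeasurePreserving.preimage_ae_eq
      polarCoord_source_ae_eq_univ

theorem det_restrictScalars_toSpanSingleton (d : ℂ) :
    ((ContinuousLinearMap.toSpanSingleton ℂ d).restrictScalars ℝ).det = normSq d := by
  simp [ContinuousLinearMap.det, LinearMap.det_restrictScalars, Algebra.norm_complex_eq]

theorem setLIntegral_image_eq_sq_norm_deriv {s : Set ℂ} {h h' : ℂ → ℂ}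
    (hs : MeasurableSet s) (hh : ∀ z ∈ s, HasDerivAt h (h' z) z) (hinj : InjOn h s)
    (g : ℂ → ℝ≥0∞) :
    ∫⁻ w in h '' s, g w = ∫⁻ z in s, ENNReal.ofReal (‖h' z‖ ^ 2) * g (h z) := by
  rw [lintegral_image_eq_lintegral_abs_det_fderiv_mul volume hs
    (fun z hz => ((hh z hz).hasFDerivAt.restrictScalars ℝ).hasFDerivWithinAt) hinj]
  simp_rw [det_restrictScalars_toSpanSingleton, abs_of_nonneg (normSq_nonneg _),
    normSq_eq_norm_sq]

theorem norm_cpow_neg_inv_natCast (z : ℂ) (M : ℕ) :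
    ‖z ^ (-(M : ℂ)⁻¹)‖ = ‖z‖ ^ (-(M : ℝ)⁻¹) := by
  rw [← norm_cpow_real]
  push_cast
  rfl

theorem cpow_neg_inv_natCast_pow (z : ℂ) {M : ℕ} (hM : M ≠ 0) :
    (z ^ (-(M : ℂ)⁻¹)) ^ M = z⁻¹ := by
  rw [← cpow_nat_mul, mul_neg, mul_inv_cancel₀ (Nat.cast_ne_zero.mpr hM), cpow_neg_one]

theorem tendsto_cpow_neg_inv_natCast_cobounded {M : ℕ} (hM : M ≠ 0) :
    Tendsto (fun z : ℂ => z ^ (-(M : ℂ)⁻¹)) (Bornology.cobounded ℂ) (𝓝 0) := by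
  rw [tendsto_zero_iff_norm_tendsto_zero]
  simp_rw [norm_cpow_neg_inv_natCast]
  exact (tendsto_rpow_neg_atTop (by positivity)).comp tendsto_norm_cobounded_atTop

theorem norm_deriv_cpow_neg_inv_natCast (z : ℂ) (M : ℕ) :
    ‖-(M : ℂ)⁻¹ * z ^ (-(M : ℂ)⁻¹ - 1)‖ = (M : ℝ)⁻¹ / ‖z‖ ^ (1 + (M : ℝ)⁻¹) := by
  rw [norm_mul, norm_neg, norm_inv, norm_natCast, div_eq_mul_inv,
    ← Real.rpow_neg (norm_nonneg z), ← norm_cpow_real]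
  push_cast
  ring_nf

end Complex

theorem lintegral_le_withDensity_image_of_le_sq_norm_deriv_mul {ρ κ : ℂ → ℝ} {h : ℂ → ℂ}
    {s : Set ℂ} (hs : MeasurableSet s) (hdiff : ∀ z ∈ s, DifferentiableAt ℂ h z)
    (hinj : InjOn h s) (hκ : ∀ z ∈ s, κ z ≤ ‖deriv h z‖ ^ 2 * ρ (h z)) :
    ∫⁻ z in s, ENNReal.ofReal (κ z) ≤
      volume.withDensity (fun w => ENNReal.ofReal (ρ w)) (h '' s) :=
  calc ∫⁻ z in s, ENNReal.ofReal (κ z)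
      ≤ ∫⁻ z in s, ENNReal.ofReal (‖deriv h z‖ ^ 2) * ENNReal.ofReal (ρ (h z)) :=
        setLIntegral_mono' hs fun z hz => by
          rw [← ENNReal.ofReal_mul (by positivity)]
          exact ENNReal.ofReal_le_ofReal (hκ z hz)
    _ = ∫⁻ w in h '' s, ENNReal.ofReal (ρ w) :=
        (Complex.setLIntegral_image_eq_sq_norm_deriv hs (fun z hz => (hdiff z hz).hasDerivAt)
          hinj fun w => ENNReal.ofReal (ρ w)).symm
    _ ≤ _ := withDensity_apply_le _ _

theorem ae_le_of_withDensity_image_le {ρ κ : ℂ → ℝ} {h : ℂ → ℂ} {D : Set ℂ}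
    (hD : MeasurableSet D) (hκ_meas : Measurable κ) (hdiff : ∀ z ∈ D, DifferentiableAt ℂ h z)
    (hinj : InjOn h D) (hκ : ∀ z ∈ D, κ z ≤ ‖deriv h z‖ ^ 2 * ρ (h z))
    (himage : ∀ s, MeasurableSet s → s ⊆ D →
      volume.withDensity (fun w => ENNReal.ofReal (ρ w)) (h '' s) ≤
        volume.withDensity (fun w => ENNReal.ofReal (ρ w)) s) :
    ∀ᵐ z, z ∈ D → ENNReal.ofReal (κ z) ≤ ENNReal.ofReal (ρ z) := by
  suffices hle : D.indicator (fun z => ENNReal.ofReal (κ z)) ≤ᵐ[volume]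
      fun z => ENNReal.ofReal (ρ z) by
    filter_upwards [hle] with z hz hzD
    rwa [indicator_of_mem hzD] at hz
  refine ae_le_of_forall_setLIntegral_le_of_sigmaFinite
    (hκ_meas.ennreal_ofReal.indicator hD) fun s hs _ => ?_
  have hDs : MeasurableSet (D ∩ s) := hD.inter hs
  calc ∫⁻ z in s, D.indicator (fun z => ENNReal.ofReal (κ z)) z
      = ∫⁻ z in D ∩ s, ENNReal.ofReal (κ z) := setLIntegral_indicator hD _
    _ ≤ volume.withDensity (fun w => ENNReal.ofReal (ρ w)) (h '' (D ∩ s)) :=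
        lintegral_le_withDensity_image_of_le_sq_norm_deriv_mul hDs
          (fun z hz => hdiff z hz.1) (hinj.mono inter_subset_left) fun z hz => hκ z hz.1
    _ ≤ volume.withDensity (fun w => ENNReal.ofReal (ρ w)) s :=
        (himage _ hDs inter_subset_left).trans (measure_mono inter_subset_right)
    _ = ∫⁻ z in s, ENNReal.ofReal (ρ z) := withDensity_apply _ hs

theorem AnalyticAt.exists_pow_eq_inv {g : ℂ → ℂ} {q : ℂ} (hg : AnalyticAt ℂ g q)
    (hgq : g q ≠ 0) {M : ℕ} (hM : M ≠ 0) :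
    ∃ G : ℂ → ℂ, AnalyticAt ℂ G q ∧ ∀ w, G w ^ M = (g w)⁻¹ := by
  obtain ⟨d, hd⟩ := IsAlgClosed.exists_pow_nat_eq (g q)⁻¹ (Nat.pos_of_ne_zero hM)
  -- `g / g q` takes the value `1` at `q`, so its principal `M`-th root is analytic there
  refine ⟨fun w => d * ((g w / g q) ^ (M⁻¹ : ℂ))⁻¹, ?_, fun w => ?_⟩
  · refine analyticAt_const.mul ((hg.div_const.cpow analyticAt_const ?_).inv ?_) <;>
      simp [hgq]
  · rw [mul_pow, inv_pow, Complex.cpow_nat_inv_pow _ hM, hd]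
    field_simp

theorem AnalyticAt.exists_rightInverse_of_deriv_ne_zero {𝕜 : Type*} [NontriviallyNormedField 𝕜]
    [CompleteSpace 𝕜] {φ : 𝕜 → 𝕜} {a : 𝕜} (hφ : AnalyticAt 𝕜 φ a) (hd : deriv φ a ≠ 0) :
    ∃ σ : 𝕜 → 𝕜, ∃ C > 0, Tendsto σ (𝓝 (φ a)) (𝓝 a) ∧
      ∀ᶠ u in 𝓝 (φ a), φ (σ u) = u ∧ DifferentiableAt 𝕜 σ u ∧ C ≤ ‖deriv σ u‖ := by
  have hstrict := hφ.hasStrictDerivAt.hasStrictFDerivAt_equiv hd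
  set Φ := hstrict.toOpenPartialHomeomorph φ
  have ha : a ∈ Φ.source := hstrict.mem_toOpenPartialHomeomorph_source
  have hσ : Tendsto Φ.symm (𝓝 (φ a)) (𝓝 a) := Φ.tendsto_symm ha
  have hderiv_nhds : {y : 𝕜 | y ≠ 0 ∧ ‖y‖ < 2 * ‖deriv φ a‖} ∈ 𝓝 (deriv φ a) :=
    (isOpen_ne.inter (isOpen_lt continuous_norm continuous_const)).mem_nhds
      ⟨hd, by rw [mem_ofPred_eq]; linarith [norm_pos_iff.mpr hd]⟩
  have hnear : ∀ᶠ w in 𝓝 a, DifferentiableAt 𝕜 φ w ∧ deriv φ w ≠ 0 ∧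
      ‖deriv φ w‖ < 2 * ‖deriv φ a‖ :=
    (hφ.eventually_analyticAt.mono fun _ h => h.differentiableAt).and
      (hφ.deriv.continuousAt.eventually_mem hderiv_nhds)
  refine ⟨Φ.symm, (2 * ‖deriv φ a‖)⁻¹, by positivity, hσ, ?_⟩
  filter_upwards [hσ.eventually hnear, Φ.open_target.mem_nhds
    hstrict.image_mem_toOpenPartialHomeomorph_target] with u ⟨hdiff, hne, hlt⟩ hu
  have hσ_deriv := Φ.hasDerivAt_symm hu hne hdiff.hasDerivAt
  refine ⟨Φ.right_inv hu, hσ_deriv.differentiableAt, ?_⟩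
  rw [hσ_deriv.deriv, norm_inv]
  exact inv_anti₀ (norm_pos_iff.mpr hne) hlt.le

theorem AnalyticAt.exists_inverse_branch_div_sub_pow {g : ℂ → ℂ} {q : ℂ} (hg : AnalyticAt ℂ g q)
    (hgq : g q ≠ 0) {M : ℕ} (hM : M ≠ 0) :
    ∃ h : ℂ → ℂ, ∃ C > 0,
      Tendsto h (Bornology.cobounded ℂ ⊓ 𝓟 Complex.slitPlane) (𝓝[≠] q) ∧
      ∀ᶠ z in Bornology.cobounded ℂ ⊓ 𝓟 Complex.slitPlane,
        g (h z) / (h z - q) ^ M = z ∧ DifferentiableAt ℂ h z ∧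
          C / ‖z‖ ^ (2 + 2 / (M : ℝ)) ≤ ‖deriv h z‖ ^ 2 := by
  obtain ⟨G, hG, hG_pow⟩ := hg.exists_pow_eq_inv hgq hM
  set η : ℂ → ℂ := fun w => (w - q) * G w
  have hη_q : η q = 0 := by simp [η]
  have hη_pow (w : ℂ) : g w / (w - q) ^ M = (η w ^ M)⁻¹ := by
    rw [mul_pow, hG_pow, mul_inv, inv_inv, div_eq_mul_inv, mul_comm]
  have hη : AnalyticAt ℂ η q := (analyticAt_id.sub analyticAt_const).mul hG
  have hη_deriv : HasDerivAt η (1 * G q + (q - q) * deriv G q) q :=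
    ((hasDerivAt_id q).sub_const q).mul hG.differentiableAt.hasDerivAt
  have hGq : G q ≠ 0 := (pow_ne_zero_iff hM).mp (by rw [hG_pow]; exact inv_ne_zero hgq)
  obtain ⟨σ, C, hC, hσ_lim, hσ⟩ :=
    hη.exists_rightInverse_of_deriv_ne_zero (by simpa [hη_deriv.deriv])
  rw [hη_q] at hσ_lim hσ
  set l := Bornology.cobounded ℂ ⊓ 𝓟 Complex.slitPlane
  set j : ℂ → ℂ := fun z => z ^ (-(M : ℂ)⁻¹)
  have hj_lim : Tendsto j l (𝓝 0) :=
    (Complex.tendsto_cpow_neg_inv_natCast_cobounded hM).mono_left inf_le_left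
  have hslit : ∀ᶠ z in l, z ∈ Complex.slitPlane := mem_inf_of_right (mem_principal_self _)
  have hh_ne : ∀ᶠ z in l, σ (j z) ≠ q := by
    filter_upwards [hj_lim.eventually hσ, hslit] with z hz hz_slit h0
    have hj0 : j z = 0 := by rw [← hz.1, h0, hη_q]
    exact Complex.slitPlane_ne_zero hz_slit (Complex.cpow_eq_zero_iff _ _ |>.mp hj0).1
  refine ⟨σ ∘ j, (C * (M : ℝ)⁻¹) ^ 2, by positivity,
    tendsto_nhdsWithin_iff.mpr ⟨hσ_lim.comp hj_lim, hh_ne⟩, ?_⟩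
  filter_upwards [hj_lim.eventually hσ, hslit] with z ⟨hη_σ, hσ_diff, hσ_deriv⟩ hz_slit
  have hj_deriv : HasDerivAt j (-(M : ℂ)⁻¹ * z ^ (-(M : ℂ)⁻¹ - 1)) z :=
    (Complex.hasStrictDerivAt_cpow_const hz_slit).hasDerivAt
  have hh_deriv := hσ_diff.hasDerivAt.comp z hj_deriv
  refine ⟨?_, hh_deriv.differentiableAt, ?_⟩
  · rw [comp_apply, hη_pow, hη_σ, Complex.cpow_neg_inv_natCast_pow z hM, inv_inv]
  · have hexp : (1 + (M : ℝ)⁻¹) * (2 : ℕ) = 2 + 2 / M := by push_cast; ring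
    rw [hh_deriv.deriv, norm_mul, Complex.norm_deriv_cpow_neg_inv_natCast, ← mul_div_assoc,
      div_pow, ← Real.rpow_mul_natCast (norm_nonneg z), hexp, mul_pow, mul_pow]
    gcongr

theorem SphereModel.exists_inverse_branch_of_pole {𝕊 : Type} [MetricSpace 𝕊] [CompactSpace 𝕊]
    (S : SphereModel 𝕊) {f : 𝕊 → 𝕊} {q : ℂ} {M : ℕ} (hM : M ≠ 0)
    (hqpole : ∃ g : ℂ → ℂ, AnalyticAt ℂ g q ∧ g q ≠ 0 ∧
      ∀ᶠ w in 𝓝[≠] q, f (S.ι w) = S.ι (g w / (w - q) ^ M))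
    {U : Set ℂ} (hU : U ∈ 𝓝 q) :
    ∃ h : ℂ → ℂ, ∃ C > 0, ∃ r > 0, ∀ z, r ≤ ‖z‖ → z ∈ Complex.slitPlane →
      (h z ∈ U ∧ f (S.ι (h z)) = S.ι z) ∧ DifferentiableAt ℂ h z ∧
        C / ‖z‖ ^ ((2 : ℝ) + 2 / M) ≤ ‖deriv h z‖ ^ 2 := by
  obtain ⟨g, hg, hgq, hfg⟩ := hqpole
  obtain ⟨h, C, hC, hh_lim, hh⟩ := hg.exists_inverse_branch_div_sub_pow hgq hM
  have hfar : ∀ᶠ z in Bornology.cobounded ℂ ⊓ 𝓟 Complex.slitPlane,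
      (h z ∈ U ∧ f (S.ι (h z)) = S.ι z) ∧ DifferentiableAt ℂ h z ∧
        C / ‖z‖ ^ ((2 : ℝ) + 2 / M) ≤ ‖deriv h z‖ ^ 2 := by
    filter_upwards [hh_lim.eventually (hfg.and (nhdsWithin_le_nhds hU)), hh]
      with z ⟨hfz, hzU⟩ ⟨hz_eq, hz_diff, hz_deriv⟩
    exact ⟨⟨hzU, by rw [hfz, hz_eq]⟩, hz_diff, hz_deriv⟩
  rw [eventually_inf_principal, hasBasis_cobounded_norm.eventually_iff] at hfar
  obtain ⟨r, -, hr⟩ := hfar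
  exact ⟨h, C, hC, max r 1, by positivity, fun z hz => hr (le_trans (le_max_left r 1) hz)⟩

theorem density_lower_bound_at_pole_general {𝕊 : Type} [MetricSpace 𝕊] [CompactSpace 𝕊]
    (S : SphereModel 𝕊) (f : 𝕊 → 𝕊)
    (q : ℂ) (M : ℕ) (hM : 1 ≤ M)
    (hqpole : ∃ g : ℂ → ℂ, AnalyticAt ℂ g q ∧ g q ≠ 0 ∧
      ∀ᶠ w in 𝓝[≠] q, f (S.ι w) = S.ι (g w / (w - q) ^ M))
    (ρ : ℂ → ℝ) (μ : Measure ℂ)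
    (hμ : μ = MeasureTheory.volume.withDensity (fun z => ENNReal.ofReal (ρ z)))
    (hinv : ∀ E : Set ℂ, MeasurableSet E → μ {z : ℂ | f (S.ι z) ∈ S.ι '' E} = μ E)
    (hlow : ∃ δ > (0:ℝ), ∃ b > (0:ℝ), ∀ z ∈ Metric.ball q δ, b ≤ ρ z) :
    ∃ c > (0:ℝ), ∃ r₀ > (0:ℝ), ∀ᵐ z ∂MeasureTheory.volume,
      r₀ ≤ ‖z‖ → c / ‖z‖ ^ ((2 : ℝ) + 2 / M) < ρ z := by
  subst hμ
  obtain ⟨δ, hδ, b, hb, hρb⟩ := hlow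
  obtain ⟨h, C, hC, r, hr, hbranch⟩ :=
    S.exists_inverse_branch_of_pole (Nat.one_le_iff_ne_zero.mp hM) hqpole (ball_mem_nhds q hδ)
  set D := {z : ℂ | r ≤ ‖z‖} ∩ Complex.slitPlane
  have hD (z : ℂ) (hz : z ∈ D) := hbranch z hz.1 hz.2
  have hD_meas : MeasurableSet D :=
    (measurableSet_le measurable_const measurable_norm).inter
      Complex.isOpen_slitPlane.measurableSet
  have hinj : InjOn h D := fun z hz w hw hzw =>
    S.injective_ι (by rw [← (hD z hz).1.2, ← (hD w hw).1.2, hzw])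
  have himage (s : Set ℂ) (hs : MeasurableSet s) (hsD : s ⊆ D) :
      volume.withDensity (fun w => ENNReal.ofReal (ρ w)) (h '' s) ≤
        volume.withDensity (fun w => ENNReal.ofReal (ρ w)) s := by
    refine (measure_mono ?_).trans_eq (hinv s hs)
    rintro _ ⟨z, hz, rfl⟩
    exact ⟨z, hz, (hD z (hsD hz)).1.2.symm⟩
  have hρ := ae_le_of_withDensity_image_le (κ := fun z => C / ‖z‖ ^ ((2 : ℝ) + 2 / M) * b)
    hD_meas (by fun_prop) (fun z hz => (hD z hz).2.1) hinj
    (fun z hz => mul_le_mul (hD z hz).2.2 (hρb _ (hD z hz).1.1) hb.le (sq_nonneg _)) himage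
  refine ⟨C * b / 2, by positivity, r, hr, ?_⟩
  filter_upwards [hρ, Complex.ae_mem_slitPlane] with z hz hz_slit hzr
  have hκ_pos : 0 < C / ‖z‖ ^ ((2 : ℝ) + 2 / M) * b :=
    mul_pos (div_pos hC (Real.rpow_pos_of_pos (hr.trans_le hzr) _)) hb
  have hκ_le := (ENNReal.ofReal_le_ofReal_iff'.mp (hz ⟨hzr, hz_slit⟩)).resolve_right hκ_pos.not_ge
  calc C * b / 2 / ‖z‖ ^ ((2 : ℝ) + 2 / M) = C / ‖z‖ ^ ((2 : ℝ) + 2 / M) * b / 2 := by ring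
    _ < ρ z := by linarith

/-- **Density blow-up at a pole.**  If `f` has a pole `q` of order `M ≥ 1` and the density
`ρ` of an absolutely continuous invariant measure `μ = ρ·m` is bounded away from zero
near `q`, then `ρ(z) > c / |z|^{2 + 2/M}` for almost all large `|z|`. -/
theorem density_lower_bound_at_pole {𝕊 : Type} [MetricSpace 𝕊] [CompactSpace 𝕊]
    (S : SphereModel 𝕊) (f : 𝕊 → 𝕊) (hf : S.MeromorphicDyn f)
    (q : ℂ) (M : ℕ) (hM : 1 ≤ M)
    (hqpole : ∃ g : ℂ → ℂ, AnalyticAt ℂ g q ∧ g q ≠ 0 ∧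
      ∀ᶠ w in 𝓝[≠] q, f (S.ι w) = S.ι (g w / (w - q) ^ M))
    (ρ : ℂ → ℝ) (μ : Measure ℂ)
    (hμ : μ = MeasureTheory.volume.withDensity (fun z => ENNReal.ofReal (ρ z)))
    (hinv : ∀ E : Set ℂ, MeasurableSet E → μ {z : ℂ | f (S.ι z) ∈ S.ι '' E} = μ E)
    (hlow : ∃ δ > (0:ℝ), ∃ b > (0:ℝ), ∀ z ∈ Metric.ball q δ, b ≤ ρ z) :
    ∃ c > (0:ℝ), ∃ r₀ > (0:ℝ), ∀ᵐ z ∂MeasureTheory.volume,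
      r₀ ≤ ‖z‖ → c / ‖z‖ ^ ((2 : ℝ) + 2 / M) < ρ z :=
  density_lower_bound_at_pole_general S f q M hM hqpole ρ μ hμ hinv hlow
end
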